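/- arXiv:2305.12230 — 3 statements merged into one kernel-verified Lean document; each statement's English description precedes it below -/
import Mathlib

section
/- Let n ≥ 1 and let (ξ_k)_{k≥1} be a sequence of points ξ_k = (ξ_{1,k}, …, ξ_{n,k}) in the unit cube [0,1)^n that is well distributed, i.e. there exist a constant C > 0 and infinitely many positive integers q such that for every η = (η_1, …, η_n) ∈ [0,1)^n for which the box B_{C,q}(η) = ∏_{j=1}^n [η_j, η_j + C/q^{1/n}) is contained in [0,1)^n, there exists a positive integer k ≤ q with ξ_k ∈ B_{C,q}(η). Then for Lebesgue-almost all η = (η_1, …, η_n) ∈ [0,1)^n one has liminf_{k→∞} k^{1/n} · max_{1≤j≤n} ‖ξ_{j,k} − η_j‖ = 0, where ‖x‖ = min_{a∈ℤ} |x − a| denotes the distance from x to the nearest integer. -/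
/-!
Fix `ε > 0` and `K`, and let `E` be the set of `η` with `k^(1/n) · max_j ‖ξ_{j,k} - η_j‖ > ε`
for every `k ≥ K`. Take a sup-norm ball `B` of radius `r` inside the cube and a scale `q` of the
well-distribution property so large that `s = C / q^(1/n)` is small compared with `r`. Cutting `B`
into about `(r / s)^n` tiles of side `s`, each tile contains some `ξ_k` with `k ≤ q`, and distinct
tiles give distinct `k`, so all but `K` tiles have `k ≥ K`. In such a tile, the points within
distance `min C ε / q^(1/n)` of `ξ_k` lie outside `E`, and they occupy a fixed fraction of the
tile. Hence `E` fills at most a fixed proportion `1 - β < 1` of every such ball, and the Lebesgue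
density theorem forces `E` to be null. A countable union over `ε = 1/(i+1)` and `K` finishes.
-/

open MeasureTheory Filter

/-- Distance from `x` to the nearest integer: `‖x‖ = min_{a ∈ ℤ} |x - a|`. -/
noncomputable def nint (x : ℝ) : ℝ := ⨅ a : ℤ, |x - (a : ℝ)|

open Metric Set Topology ENNReal

lemma nint_nonneg (x : ℝ) : 0 ≤ nint x := le_ciInf fun _ => abs_nonneg _

lemma nint_le_abs (x : ℝ) : nint x ≤ |x| := by
  simpa [nint] using ciInf_le (⟨0, by rintro _ ⟨a, rfl⟩; positivity⟩ :
    BddBelow (range fun a : ℤ => |x - (a : ℝ)|)) (0 : ℤ)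

theorem measure_eq_zero_of_le_mul_measure_closedBall {β : Type*} [MetricSpace β]
    [MeasurableSpace β] [BorelSpace β] [SecondCountableTopology β] [HasBesicovitchCovering β]
    (μ : Measure β) [IsLocallyFiniteMeasure μ] {s U : Set β} (hU : IsOpen U) (hsU : s ⊆ U)
    {c : ℝ≥0∞} (hc : c < 1)
    (h : ∀ x r, 0 < r → closedBall x r ⊆ U → μ (s ∩ closedBall x r) ≤ c * μ (closedBall x r)) :
    μ s = 0 := by
  by_contra hs
  have : (ae (μ.restrict s)).NeBot := ae_neBot.mpr (by rwa [Ne, Measure.restrict_eq_zero])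
  have hmemU : ∀ᵐ x ∂μ.restrict s, x ∈ U :=
    (ae_restrict_mem hU.measurableSet).filter_mono (ae_mono (Measure.restrict_mono hsU le_rfl))
  obtain ⟨x, hx, hxU⟩ := ((Besicovitch.ae_tendsto_measure_inter_div μ s).and hmemU).exists
  obtain ⟨ε, hε, hεU⟩ := nhds_basis_closedBall.mem_iff.mp (hU.mem_nhds hxU)
  have hsmall : ∀ᶠ r in 𝓝[>] (0 : ℝ), r ∈ Ioc 0 ε := Ioc_mem_nhdsGT hε
  obtain ⟨r, hr, hrc⟩ := (hsmall.and (hx.eventually (Ioi_mem_nhds hc))).exists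
  exact (ENNReal.div_le_of_le_mul
    (h x r hr.1 ((closedBall_subset_closedBall hr.2).trans hεU))).not_gt hrc

section Boxes

variable {ι : Type*}

def tile (a : ι → ℝ) (s : ℝ) (m : ι → ℕ) : Set (ι → ℝ) :=
  univ.pi fun j => Ico (a j + m j * s) (a j + m j * s + s)

theorem eq_of_mem_tile {a y : ι → ℝ} {s : ℝ} (hs : 0 < s) {m m' : ι → ℕ}
    (hm : y ∈ tile a s m) (hm' : y ∈ tile a s m') : m = m' := by
  have index_eq : ∀ {m}, y ∈ tile a s m → ∀ j, m j = ⌊(y j - a j) / s⌋₊ := by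
    intro m hm j
    obtain ⟨h₁, h₂⟩ := hm j trivial
    symm
    rw [Nat.floor_eq_iff (div_nonneg (by nlinarith [(m j).cast_nonneg (α := ℝ)]) hs.le),
      le_div_iff₀ hs, div_lt_iff₀ hs]
    constructor <;> linarith
  funext j
  rw [index_eq hm, index_eq hm']

theorem measurableSet_tile [Countable ι] (a : ι → ℝ) (s : ℝ) (m : ι → ℕ) :
    MeasurableSet (tile a s m) :=
  .univ_pi fun _ => measurableSet_Ico

variable [Fintype ι]

theorem tile_subset_closedBall {x : ι → ℝ} {r s : ℝ} {M : ℕ} (hs : 0 ≤ s)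
    (hMs : M * s ≤ 2 * r) {m : ι → ℕ} (hm : ∀ j, m j < M) :
    tile (fun j => x j - r) s m ⊆ closedBall x r := by
  intro y hy
  have hr : 0 ≤ r := by nlinarith [M.cast_nonneg (α := ℝ)]
  refine mem_closedBall.mpr ((dist_pi_le_iff hr).mpr fun j => ?_)
  obtain ⟨h₁, h₂⟩ := hy j trivial
  have hmj : (m j : ℝ) + 1 ≤ M := by exact_mod_cast hm j
  rw [Real.dist_eq, abs_le]
  constructor <;> nlinarith [(m j).cast_nonneg (α := ℝ)]

theorem ofReal_pow_card_le_volume_pi_Ico_inter_closedBall {b y : ι → ℝ} {s t : ℝ}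
    (hy : y ∈ univ.pi fun j => Ico (b j) (b j + s)) (ht : 0 ≤ t) (hts : t ≤ s) :
    ENNReal.ofReal t ^ Fintype.card ι ≤
      volume ((univ.pi fun j => Ico (b j) (b j + s)) ∩ closedBall y t) := by
  -- `[lo j, lo j + t)` is a subinterval of `[b j, b j + s)` whose closure contains `y j`
  set lo : ι → ℝ := fun j => min (y j) (b j + s - t)
  have hlo : ∀ j, b j ≤ lo j ∧ lo j + t ≤ b j + s ∧ lo j ≤ y j ∧ y j ≤ lo j + t := by
    intro j
    obtain ⟨hb, hs⟩ := hy j trivial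
    rcases le_total (y j) (b j + s - t) with h | h
    · simp only [lo, min_eq_left h]; refine ⟨?_, ?_, ?_, ?_⟩ <;> linarith
    · simp only [lo, min_eq_right h]; refine ⟨?_, ?_, ?_, ?_⟩ <;> linarith
  have hsub : (univ.pi fun j => Ico (lo j) (lo j + t)) ⊆
      (univ.pi fun j => Ico (b j) (b j + s)) ∩ closedBall y t := by
    intro z hz
    simp only [mem_univ_pi, mem_Ico] at hz
    refine ⟨fun j _ => ?_, mem_closedBall.mpr ((dist_pi_le_iff ht).mpr fun j => ?_)⟩
    · exact ⟨(hlo j).1.trans (hz j).1, (hz j).2.trans_le (hlo j).2.1⟩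
    · rw [Real.dist_eq, abs_le]
      constructor <;> linarith [hz j, hlo j]
  calc ENNReal.ofReal t ^ Fintype.card ι
      = volume (univ.pi fun j => Ico (lo j) (lo j + t)) := by
        simp [Real.volume_pi_Ico]
    _ ≤ _ := measure_mono hsub

theorem card_mul_le_volume_biUnion_tile_inter_closedBall {a : ι → ℝ} {s t : ℝ} (hs : 0 < s)
    (ht : 0 ≤ t) (hts : t ≤ s) (I : Finset (ι → ℕ)) {y : (ι → ℕ) → ι → ℝ}
    (hy : ∀ m ∈ I, y m ∈ tile a s m) :
    I.card * ENNReal.ofReal t ^ Fintype.card ι ≤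
      volume (⋃ m ∈ I, tile a s m ∩ closedBall (y m) t) := by
  have hdisj : (I : Set (ι → ℕ)).PairwiseDisjoint fun m => tile a s m ∩ closedBall (y m) t :=
    fun m _ m' _ hne => disjoint_left.mpr fun z hz hz' => hne (eq_of_mem_tile hs hz.1 hz'.1)
  rw [measure_biUnion_finset hdisj fun m _ =>
    (measurableSet_tile a s m).inter measurableSet_closedBall, ← nsmul_eq_mul]
  exact Finset.card_nsmul_le_sum _ _ _ fun m hm =>
    ofReal_pow_card_le_volume_pi_Ico_inter_closedBall (hy m hm) ht hts

end Boxes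

theorem Finset.card_le_card_filter_le_add {α : Type*} (I : Finset α) {k : α → ℕ}
    (hk : InjOn k I) (K : ℕ) : I.card ≤ (I.filter (K ≤ k ·)).card + K := by
  have hsmall : (I.filter (¬ K ≤ k ·)).card ≤ K := by
    simpa using Finset.card_le_card_of_injOn k (t := Finset.range K)
      (fun m hm => by simpa using (Finset.mem_filter.mp hm).2)
      (hk.mono (Finset.coe_subset.mpr (Finset.filter_subset _ I)))
  rw [← Finset.card_filter_add_card_filter_not (K ≤ k ·)]
  omega

def unitCube (ι : Type*) : Set (ι → ℝ) := univ.pi fun _ => Ico 0 1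

def HitsBoxes {ι : Type*} (ξ : ℕ → ι → ℝ) (q : ℕ) (s : ℝ) : Prop :=
  ∀ η : ι → ℝ, (∀ j, η j ∈ Ico (0 : ℝ) 1) →
    (univ.pi fun j => Ico (η j) (η j + s)) ⊆ unitCube ι →
    ∃ k : ℕ, 1 ≤ k ∧ k ≤ q ∧ ∀ j, ξ k j ∈ Ico (η j) (η j + s)

theorem HitsBoxes.exists_injOn_mem_tile {ι : Type*} {ξ : ℕ → ι → ℝ} {q : ℕ} {s : ℝ}
    (hq : HitsBoxes ξ q s) (hs : 0 < s) {a : ι → ℝ} {I : Set (ι → ℕ)}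
    (hI : ∀ m ∈ I, tile a s m ⊆ unitCube ι) :
    ∃ k : (ι → ℕ) → ℕ, InjOn k I ∧ ∀ m ∈ I, k m ≤ q ∧ ξ (k m) ∈ tile a s m := by
  have hit : ∀ m ∈ I, ∃ k, k ≤ q ∧ ξ k ∈ tile a s m := by
    intro m hm
    have corner_mem : (fun j => a j + m j * s) ∈ tile a s m :=
      fun j _ => ⟨le_rfl, lt_add_of_pos_right _ hs⟩
    obtain ⟨k, -, hkq, hk⟩ := hq _ (fun j => hI m hm corner_mem j trivial) (hI m hm)
    exact ⟨k, hkq, fun j _ => hk j⟩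
  choose! k hkq hk using hit
  exact ⟨k, fun m hm m' hm' hkk => eq_of_mem_tile hs (hk m hm) (hkk ▸ hk m' hm'),
    fun m hm => ⟨hkq m hm, hk m hm⟩⟩

section WellDistributed

variable {n : ℕ}

noncomputable def approxError (ξ : ℕ → Fin n → ℝ) (η : Fin n → ℝ) (k : ℕ) : ℝ :=
  (k : ℝ) ^ ((1 : ℝ) / n) * ⨆ j, nint (ξ k j - η j)

theorem approxError_nonneg (ξ : ℕ → Fin n → ℝ) (η : Fin n → ℝ) (k : ℕ) :
    0 ≤ approxError ξ η k :=
  mul_nonneg (by positivity) (Real.iSup_nonneg fun _ => nint_nonneg _)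

theorem approxError_le_of_mem_closedBall {ξ : ℕ → Fin n → ℝ} {η : Fin n → ℝ} {k q : ℕ}
    {t : ℝ} (hkq : k ≤ q) (hη : η ∈ closedBall (ξ k) t) :
    approxError ξ η k ≤ (q : ℝ) ^ ((1 : ℝ) / n) * t := by
  have ht : 0 ≤ t := dist_nonneg.trans hη
  refine mul_le_mul (by gcongr) (Real.iSup_le (fun j => (nint_le_abs _).trans ?_) ht)
    (Real.iSup_nonneg fun _ => nint_nonneg _) (by positivity)
  exact (Real.dist_eq _ _ ▸ dist_le_pi_dist (ξ k) η j).trans (mem_closedBall'.mp hη)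

def farSet (ξ : ℕ → Fin n → ℝ) (ε : ℝ) (K : ℕ) : Set (Fin n → ℝ) :=
  {η | ∀ k, K ≤ k → ε < approxError ξ η k}

theorem volume_farSet_inter_closedBall_add_le {ξ : ℕ → Fin n → ℝ} {q K : ℕ} {ε r s t : ℝ}
    {x : Fin n → ℝ} (hq : HitsBoxes ξ q s) (hs : 0 < s) (hsr : s ≤ r)
    (hK : 2 * K * s ^ n ≤ r ^ n) (ht : 0 ≤ t) (hts : t ≤ s)
    (htε : (q : ℝ) ^ ((1 : ℝ) / n) * t ≤ ε) (hx : closedBall x r ⊆ unitCube (Fin n)) :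
    volume (farSet ξ ε K ∩ closedBall x r) + ENNReal.ofReal ((t / s) ^ n * r ^ n / 2) ≤
      volume (closedBall x r) := by
  set M := ⌈r / s⌉₊
  have hrM : r ≤ M * s := (div_le_iff₀ hs).mp (Nat.le_ceil _)
  have hMs : M * s ≤ 2 * r :=
    calc (M : ℝ) * s ≤ (r / s + 1) * s := by
          gcongr; exact (Nat.ceil_lt_add_one (div_nonneg (hs.le.trans hsr) hs.le)).le
      _ = r + s := by field_simp
      _ ≤ 2 * r := by linarith
  set I := Fintype.piFinset fun _ : Fin n => Finset.range M
  have hI : ∀ m ∈ I, tile (fun j => x j - r) s m ⊆ closedBall x r := fun m hm =>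
    tile_subset_closedBall hs.le hMs fun j => Finset.mem_range.mp (Fintype.mem_piFinset.mp hm j)
  obtain ⟨k, hkinj, hk⟩ := hq.exists_injOn_mem_tile hs (I := I) fun m hm => (hI m hm).trans hx
  set good := I.filter (K ≤ k ·)
  set G := ⋃ m ∈ good, tile (fun j => x j - r) s m ∩ closedBall (ξ (k m)) t
  have hGB : G ⊆ closedBall x r :=
    iUnion₂_subset fun m hm => inter_subset_left.trans (hI m (Finset.mem_filter.mp hm).1)
  have hGfar : Disjoint (farSet ξ ε K ∩ closedBall x r) G := by
    refine disjoint_left.mpr fun η hη hηG => ?_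
    obtain ⟨m, hm, hηm⟩ := mem_iUnion₂.mp hηG
    obtain ⟨hmI, hKk⟩ := Finset.mem_filter.mp hm
    exact (hη.1 (k m) hKk).not_ge
      ((approxError_le_of_mem_closedBall (hk m hmI).1 hηm.2).trans htε)
  have hcard : M ^ n ≤ good.card + K := by
    simpa [I] using Finset.card_le_card_filter_le_add I hkinj K
  have hgood : r ^ n / 2 ≤ good.card * s ^ n := by
    have h₁ : r ^ n ≤ (M : ℝ) ^ n * s ^ n := by
      rw [← mul_pow]; gcongr; exact hs.le.trans hsr
    have h₂ : (M : ℝ) ^ n ≤ good.card + K := by exact_mod_cast hcard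
    nlinarith [pow_pos hs n]
  have hvolG : ENNReal.ofReal ((t / s) ^ n * r ^ n / 2) ≤ volume G := by
    calc ENNReal.ofReal ((t / s) ^ n * r ^ n / 2)
        ≤ ENNReal.ofReal ((t / s) ^ n * (good.card * s ^ n)) := by
          rw [mul_div_assoc]; gcongr
      _ = good.card * ENNReal.ofReal t ^ n := by
          rw [div_pow, div_mul_comm, mul_div_cancel_right₀ _ (pow_pos hs n).ne',
            ENNReal.ofReal_mul (by positivity), ENNReal.ofReal_natCast, ENNReal.ofReal_pow ht]
      _ ≤ volume G := by
          simpa using card_mul_le_volume_biUnion_tile_inter_closedBall hs ht hts good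
            fun m hm => (hk m (Finset.mem_filter.mp hm).1).2
  calc volume (farSet ξ ε K ∩ closedBall x r) + ENNReal.ofReal ((t / s) ^ n * r ^ n / 2)
      ≤ volume (farSet ξ ε K ∩ closedBall x r) + volume G := by gcongr
    _ = volume ((farSet ξ ε K ∩ closedBall x r) ∪ G) := by
      rw [measure_union hGfar]
      exact .biUnion good.countable_toSet fun m _ =>
        (measurableSet_tile _ s m).inter measurableSet_closedBall
    _ ≤ volume (closedBall x r) := measure_mono (union_subset inter_subset_right hGB)

def IsWellDistributedWith (ξ : ℕ → Fin n → ℝ) (C : ℝ) : Prop :=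
  ∀ Q : ℕ, ∃ q : ℕ, Q ≤ q ∧ 1 ≤ q ∧ HitsBoxes ξ q (C / (q : ℝ) ^ ((1 : ℝ) / n))

theorem volume_farSet_inter_closedBall_le (hn : 1 ≤ n) {ξ : ℕ → Fin n → ℝ} {C ε : ℝ}
    (hC : 0 < C) (hwd : IsWellDistributedWith ξ C) (hε : 0 < ε) (K : ℕ) {x : Fin n → ℝ} {r : ℝ} (hr : 0 < r)
    (hx : closedBall x r ⊆ unitCube (Fin n)) :
    volume (farSet ξ ε K ∩ closedBall x r) ≤
      ENNReal.ofReal (1 - (min C ε / (2 * C)) ^ n / 2) * volume (closedBall x r) := by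
  -- with `s = C / q^(1/n)`, `(2K+1)(C/r)^n ≤ q` gives both `s ≤ r` and `2 K s^n ≤ r^n`
  obtain ⟨Q, hQ⟩ := exists_nat_ge ((2 * K + 1) * (C / r) ^ n)
  obtain ⟨q, hQq, hq1, hq⟩ := hwd Q
  have hq0 : (0 : ℝ) < q := by exact_mod_cast hq1
  set p := (q : ℝ) ^ ((1 : ℝ) / n)
  have hp0 : 0 < p := by positivity
  have hpn : p ^ n = q := by
    rw [← Real.rpow_natCast, ← Real.rpow_mul hq0.le,
      one_div_mul_cancel (by positivity), Real.rpow_one]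
  have hsn : (2 * K + 1) * (C / p) ^ n ≤ r ^ n := by
    have : (2 * K + 1) * (C / r) ^ n ≤ q := hQ.trans (by exact_mod_cast hQq)
    rw [div_pow, hpn, mul_div_assoc', div_le_iff₀ hq0]
    rw [div_pow, mul_div_assoc', div_le_iff₀ (by positivity)] at this
    linarith
  have hsn₀ : 0 ≤ (C / p) ^ n := by positivity
  have hsr : C / p ≤ r := le_of_pow_le_pow_left₀ (by omega : n ≠ 0) hr.le (by nlinarith)
  have key := volume_farSet_inter_closedBall_add_le (K := K) (ε := ε) (t := min C ε / p) hq
    (by positivity) hsr (by nlinarith)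
    (div_nonneg (le_min hC.le hε.le) hp0.le) (div_le_div_of_nonneg_right (min_le_left _ _) hp0.le)
    (by rw [mul_div_cancel₀ _ hp0.ne']; exact min_le_right _ _) hx
  rw [show min C ε / p / (C / p) = min C ε / C by field_simp] at key
  rw [Real.volume_pi_closedBall x hr.le, Fintype.card_fin] at key ⊢
  have hβ : (min C ε / (2 * C)) ^ n ≤ 1 :=
    pow_le_one₀ (by positivity) ((div_le_one (by positivity)).mpr (by linarith [min_le_left C ε]))
  calc volume (farSet ξ ε K ∩ closedBall x r)
      ≤ ENNReal.ofReal ((2 * r) ^ n) - ENNReal.ofReal ((min C ε / C) ^ n * r ^ n / 2) :=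
        ENNReal.le_sub_of_add_le_right ENNReal.ofReal_ne_top key
    _ = ENNReal.ofReal ((2 * r) ^ n - (min C ε / C) ^ n * r ^ n / 2) :=
        (ENNReal.ofReal_sub _ (by positivity)).symm
    _ = _ := by
        rw [← ENNReal.ofReal_mul (by linarith)]
        congr 1
        rw [div_pow, div_pow, mul_pow, mul_pow]
        field_simp

theorem volume_farSet_inter_pi_Ioo_eq_zero (hn : 1 ≤ n) {ξ : ℕ → Fin n → ℝ} {C ε : ℝ}
    (hC : 0 < C) (hwd : IsWellDistributedWith ξ C) (hε : 0 < ε) (K : ℕ) :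
    volume (farSet ξ ε K ∩ univ.pi fun _ => Ioo 0 1) = 0 := by
  have hc : ENNReal.ofReal (1 - (min C ε / (2 * C)) ^ n / 2) < 1 := by
    have := lt_min hC hε
    have : 0 < (min C ε / (2 * C)) ^ n / 2 := by positivity
    exact ENNReal.ofReal_lt_one.mpr (by linarith)
  refine measure_eq_zero_of_le_mul_measure_closedBall volume
    (isOpen_set_pi finite_univ fun _ _ => isOpen_Ioo) inter_subset_right hc fun x r hr hxr => ?_
  exact (measure_mono (inter_subset_inter_left _ inter_subset_left)).trans
    (volume_farSet_inter_closedBall_le hn hC hwd hε K hr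
      (hxr.trans fun y hy j _ => Ioo_subset_Ico_self (hy j trivial)))

end WellDistributed

theorem liminf_eq_zero_of_frequently_le {f : ℕ → ℝ} (h0 : ∀ k, 0 ≤ f k)
    (h : ∀ i : ℕ, ∃ᶠ k in atTop, f k ≤ 1 / ((i : ℝ) + 1)) : atTop.liminf f = 0 := by
  have hcob : IsCoboundedUnder (· ≥ ·) atTop f :=
    .of_frequently_le (a := 1) ((h 0).mono fun k hk => hk.trans (by norm_num))
  refine le_antisymm ?_ (le_liminf_of_le hcob (.of_forall h0))
  by_contra! hlt
  obtain ⟨i, hi⟩ := exists_nat_one_div_lt hlt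
  exact (liminf_le_of_frequently_le (h i) (isBoundedUnder_of ⟨0, h0⟩)).not_gt hi

theorem well_distributed_liminf_zero_general
    (n : ℕ) (hn : 1 ≤ n) (ξ : ℕ → Fin n → ℝ)
    (hwd : ∃ C : ℝ, 0 < C ∧ ∀ Q : ℕ, ∃ q : ℕ, Q ≤ q ∧ 1 ≤ q ∧
      ∀ η : Fin n → ℝ, (∀ j, η j ∈ Set.Ico (0 : ℝ) 1) →
        (Set.univ.pi fun j => Set.Ico (η j) (η j + C / (q : ℝ) ^ ((1 : ℝ) / n))) ⊆
          (Set.univ.pi fun _ : Fin n => Set.Ico (0 : ℝ) 1) →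
        ∃ k : ℕ, 1 ≤ k ∧ k ≤ q ∧
          ∀ j, ξ k j ∈ Set.Ico (η j) (η j + C / (q : ℝ) ^ ((1 : ℝ) / n))) :
    ∀ᵐ η ∂(volume.restrict (Set.univ.pi fun _ : Fin n => Set.Ico (0 : ℝ) 1)),
      Filter.atTop.liminf
        (fun k : ℕ => (k : ℝ) ^ ((1 : ℝ) / n) * ⨆ j, nint (ξ k j - η j)) = 0 := by
  obtain ⟨C, hC, hwd⟩ := hwd
  have hIoo : (univ.pi fun _ : Fin n => Ioo (0 : ℝ) 1) =ᵐ[volume] univ.pi fun _ => Ico 0 1 :=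
    Measure.pi_Ioo_ae_eq_pi_Icc.trans Measure.pi_Ico_ae_eq_pi_Icc.symm
  rw [← Measure.restrict_congr_set hIoo]
  have hfar : ∀ᵐ η ∂volume.restrict (univ.pi fun _ : Fin n => Ioo (0 : ℝ) 1),
      ∀ i K : ℕ, η ∉ farSet ξ (1 / ((i : ℝ) + 1)) K := by
    refine ae_all_iff.mpr fun i => ae_all_iff.mpr fun K => ?_
    rw [ae_iff, Measure.restrict_apply' (.univ_pi fun _ => measurableSet_Ioo)]
    simpa only [not_not, ofPred_mem_eq] using
      volume_farSet_inter_pi_Ioo_eq_zero hn hC hwd (by positivity) K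
  filter_upwards [hfar] with η hη
  show atTop.liminf (approxError ξ η) = 0
  refine liminf_eq_zero_of_frequently_le (approxError_nonneg ξ η) fun i => ?_
  exact frequently_atTop.mpr fun K => by simpa [farSet] using hη i K

/-- **Theorem 1.** If a sequence `ξ` in `[0,1)^n` is well distributed (there exist `C > 0`
and infinitely many positive integers `q` such that every box
`∏_j [η_j, η_j + C / q^(1/n))` contained in `[0,1)^n` contains a point `ξ_k` with
`1 ≤ k ≤ q`), then for Lebesgue-almost all `η ∈ [0,1)^n` one has
`liminf_{k → ∞} k^(1/n) * max_j ‖ξ_{j,k} - η_j‖ = 0`. -/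
theorem well_distributed_liminf_zero
    (n : ℕ) (hn : 1 ≤ n) (ξ : ℕ → Fin n → ℝ)
    (hξ : ∀ k : ℕ, 1 ≤ k → ∀ j, ξ k j ∈ Set.Ico (0 : ℝ) 1)
    (hwd : ∃ C : ℝ, 0 < C ∧ ∀ Q : ℕ, ∃ q : ℕ, Q ≤ q ∧ 1 ≤ q ∧
      ∀ η : Fin n → ℝ, (∀ j, η j ∈ Set.Ico (0 : ℝ) 1) →
        (Set.univ.pi fun j => Set.Ico (η j) (η j + C / (q : ℝ) ^ ((1 : ℝ) / n))) ⊆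
          (Set.univ.pi fun _ : Fin n => Set.Ico (0 : ℝ) 1) →
        ∃ k : ℕ, 1 ≤ k ∧ k ≤ q ∧
          ∀ j, ξ k j ∈ Set.Ico (η j) (η j + C / (q : ℝ) ^ ((1 : ℝ) / n))) :
    ∀ᵐ η ∂(volume.restrict (Set.univ.pi fun _ : Fin n => Set.Ico (0 : ℝ) 1)),
      Filter.atTop.liminf
        (fun k : ℕ => (k : ℝ) ^ ((1 : ℝ) / n) * ⨆ j, nint (ξ k j - η j)) = 0 :=
  well_distributed_liminf_zero_general n hn ξ hwd
end

section
/- Let α ∈ ℝ be irrational. Then there exist infinitely many positive integers q such that for every η ∈ [0,1) there exists a positive integer k ≤ q with ‖kα − η‖ ≤ 3/q, where ‖x‖ = min_{a∈ℤ} |x − a| is the distance from x to the nearest integer. -/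
theorem nint_le_abs_sub_intCast (x : ℝ) (m : ℤ) : nint x ≤ |x - m| :=
  ciInf_le ⟨0, by rintro y ⟨a, rfl⟩; positivity⟩ m

theorem Int.exists_mem_Icc_mul_modEq {p q : ℤ} (h : IsCoprime p q) (hq : 0 < q) (a : ℤ) :
    ∃ k ∈ Set.Icc 1 q, k * p ≡ a [ZMOD q] := by
  obtain ⟨u, v, huv⟩ := h
  -- the shift by one takes the representative of `a * u` in `[1, q]` rather than `[0, q)`
  refine ⟨(a * u - 1) % q + 1, ⟨?_, ?_⟩, ?_⟩
  · have := Int.emod_nonneg (a * u - 1) hq.ne'; omega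
  · have := Int.emod_lt_of_pos (a * u - 1) hq; omega
  · calc ((a * u - 1) % q + 1) * p ≡ (a * u - 1 + 1) * p [ZMOD q] :=
          ((Int.mod_modEq _ _).add_right 1).mul_right p
      _ = a * (u * p) := by ring
      _ ≡ a [ZMOD q] := Int.modEq_iff_dvd.mpr ⟨a * v, by linear_combination (-a) * huv⟩

theorem Rat.finite_setOf_abs_le_den_le (B : ℝ) (D : ℕ) :
    {r : ℚ | |(r : ℝ)| ≤ B ∧ r.den ≤ D}.Finite := by
  obtain ⟨N, hN⟩ := exists_nat_gt (B * D)
  refine Set.Finite.subset (((Set.finite_Icc (-N : ℤ) N).prod (Set.finite_Iic D)).image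
    fun n : ℤ × ℕ => (n.1 / n.2 : ℚ)) ?_
  rintro r ⟨hr, hden⟩
  refine ⟨(r.num, r.den), ⟨abs_le.mp ?_, hden⟩, Rat.num_div_den r⟩
  have hnum : (r.num : ℝ) = r * r.den := by exact_mod_cast (Rat.mul_den_eq_num r).symm
  have : |(r.num : ℝ)| ≤ N := by
    rw [hnum, abs_mul, Nat.abs_cast]
    have : (r.den : ℝ) ≤ D := by exact_mod_cast hden
    nlinarith [abs_nonneg (r : ℝ)]
  exact_mod_cast this

theorem Real.exists_rat_abs_sub_lt_one_div_den_sq_le_den {α : ℝ} (hα : Irrational α) (Q : ℕ) :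
    ∃ r : ℚ, |α - r| < 1 / (r.den : ℝ) ^ 2 ∧ Q ≤ r.den := by
  by_contra! h
  refine Real.infinite_rat_abs_sub_lt_one_div_den_sq_of_irrational hα
    ((Rat.finite_setOf_abs_le_den_le (|α| + 1) Q).subset fun r hr => ⟨?_, (h r hr).le⟩)
  have hden : (1 : ℝ) ≤ r.den := by exact_mod_cast r.pos
  have : |α - r| < 1 := hr.trans_le (div_le_one_of_le₀ (one_le_pow₀ hden) (by positivity))
  have := abs_sub_abs_le_abs_sub (r : ℝ) α
  rw [abs_sub_comm] at this
  linarith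

theorem Rat.exists_abs_mul_sub_sub_intCast_le (r : ℚ) (η : ℝ) :
    ∃ k : ℕ, 1 ≤ k ∧ k ≤ r.den ∧ ∃ m : ℤ, |k * (r : ℝ) - η - m| ≤ 1 / (2 * r.den) := by
  have hcop : IsCoprime r.num (r.den : ℤ) := Int.isCoprime_iff_gcd_eq_one.mpr r.reduced
  set a := round (r.den * η)
  obtain ⟨k, ⟨hk1, hkq⟩, hk⟩ := Int.exists_mem_Icc_mul_modEq hcop (by exact_mod_cast r.pos) a
  obtain ⟨m, hm⟩ := Int.modEq_iff_dvd.mp hk.symm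
  lift k to ℕ using by omega
  refine ⟨k, by exact_mod_cast hk1, by exact_mod_cast hkq, m, ?_⟩
  have hmR : (k * r.num - a : ℝ) = r.den * m := by exact_mod_cast hm
  have : k * (r : ℝ) - η - (m : ℤ) = -(r.den * η - a) / r.den := by
    rw [Rat.cast_def]
    field_simp
    linear_combination hmR
  calc |k * (r : ℝ) - η - (m : ℤ)| = |r.den * η - a| / r.den := by
        rw [this, abs_div, abs_neg, Nat.abs_cast]
    _ ≤ 1 / 2 / r.den := by gcongr; exact abs_sub_round _
    _ = 1 / (2 * r.den) := by ring

/-- **Chebyshev's theorem.** For every irrational `α` there exist infinitely many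
positive integers `q` such that for every `η ∈ [0,1)` there is a positive integer
`k ≤ q` with `‖kα - η‖ ≤ 3/q`. -/
theorem chebyshev_inhomogeneous (α : ℝ) (hα : Irrational α) :
    ∀ Q : ℕ, ∃ q : ℕ, Q ≤ q ∧ 1 ≤ q ∧
      ∀ η ∈ Set.Ico (0 : ℝ) 1, ∃ k : ℕ, 1 ≤ k ∧ k ≤ q ∧
        nint ((k : ℝ) * α - η) ≤ 3 / (q : ℝ) := by
  intro Q
  obtain ⟨r, hr, hQ⟩ := Real.exists_rat_abs_sub_lt_one_div_den_sq_le_den hα Q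
  refine ⟨r.den, hQ, r.pos, fun η _ => ?_⟩
  obtain ⟨k, hk1, hkq, m, hm⟩ := r.exists_abs_mul_sub_sub_intCast_le η
  refine ⟨k, hk1, hkq, ?_⟩
  have hdrift : |k * (α - r)| ≤ 1 / r.den := by
    have hkR : (k : ℝ) ≤ r.den := by exact_mod_cast hkq
    calc |k * (α - r)| = k * |α - r| := by rw [abs_mul, Nat.abs_cast]
      _ ≤ r.den * (1 / (r.den : ℝ) ^ 2) := by gcongr
      _ = 1 / r.den := by field_simp
  calc nint (k * α - η) ≤ |k * α - η - m| := nint_le_abs_sub_intCast _ m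
    _ = |k * (α - r) + (k * r - η - m)| := by ring_nf
    _ ≤ |k * (α - r)| + |k * r - η - m| := abs_add_le _ _
    _ ≤ 1 / r.den + 1 / (2 * r.den) := add_le_add hdrift hm
    _ ≤ 3 / r.den := by field_simp; linarith
end

section
/- Let n ≥ 1 and let α = (α_1, …, α_n) ∈ ℝ^n. Suppose there exist δ > 0 and infinitely many positive integers q such that for every η = (η_1, …, η_n) ∈ ℝ^n there exists a positive integer k ≤ q with max_{1≤j≤n} ‖kα_j − η_j‖ ≤ δ/q^{1/n}. Then α is non-singular, i.e. limsup_{t→∞} t^{1/n} · ψ_α(t) > 0, where ψ_α(t) = min_{q∈ℤ, 1≤q≤t} max_{1≤j≤n} ‖qα_j‖. -/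
/-!
Work on the torus `Fin n → UnitAddCircle`, where `max_j ‖x_j‖` is the sup norm and a ball of
radius `R` has volume at most `(2R)ⁿ`. Dirichlet's theorem there gives `t^{1/n} ψ_α(t) ≤ 1`.
Conversely, let the multiples `kα`, `k ≤ q`, be `r`-dense. If `m ‖pα‖ ≤ r`, then subtracting
`s p α` (`s < m`) from `kα` moves it by at most `r`, so the at most `q/m + p` multiples
`(t m p + b) α` with `b < p` are `2r`-dense, and comparing volumes gives `1 ≤ (q/m + p)(4r)ⁿ`.
With `r = δ q^{-1/n}` and `m ≥ 2(4δ)ⁿ` this forces `ψ_α(T) ≥ r/m` for `T = q / (4(4δ)ⁿ)`, and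
`T^{1/n} r / m` does not depend on `q`.
-/

open MeasureTheory Filter

/-- The irrationality measure function
`ψ_α(t) = min_{q ∈ ℤ, 1 ≤ q ≤ t} max_{1 ≤ j ≤ n} ‖q α_j‖`. -/
noncomputable def psiFun (n : ℕ) (α : Fin n → ℝ) (t : ℝ) : ℝ :=
  sInf {v : ℝ | ∃ q : ℕ, 1 ≤ q ∧ (q : ℝ) ≤ t ∧ v = ⨆ j, nint ((q : ℝ) * α j)}

open Metric

lemma Pi.iSup_norm_eq_norm {ι : Type*} [Fintype ι] {E : ι → Type*} [∀ i, SeminormedAddGroup (E i)]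
    (f : ∀ i, E i) : ⨆ i, ‖f i‖ = ‖f‖ :=
  le_antisymm (Real.iSup_le (norm_le_pi_norm f) (norm_nonneg f))
    ((pi_norm_le_iff_of_nonneg (Real.iSup_nonneg fun _ => norm_nonneg _)).2
      fun i => le_ciSup (f := fun i => ‖f i‖) (Finite.bddAbove_range _) i)

lemma Nat.exists_eq_mul_add_mul_add (k : ℕ) {m p : ℕ} (hm : 0 < m) (hp : 0 < p) :
    ∃ t ≤ k / (m * p), ∃ s < m, ∃ b < p, k = t * (m * p) + s * p + b := by
  refine ⟨k / p / m, by rw [Nat.div_div_eq_div_mul, mul_comm], k / p % m, Nat.mod_lt _ hm,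
    k % p, Nat.mod_lt _ hp, ?_⟩
  have hp' := Nat.div_add_mod k p
  have hm' := Nat.div_add_mod (k / p) m
  nth_rewrite 1 [← hp', ← hm']
  ring

lemma exists_dist_nsmul_le_add_mul_norm_nsmul {G : Type*} [SeminormedAddCommGroup G]
    (a x : G) (k : ℕ) {m p : ℕ} (hm : 0 < m) (hp : 0 < p) :
    ∃ t ≤ k / (m * p), ∃ b < p, dist x ((t * (m * p) + b) • a) ≤ dist x (k • a) + m * ‖p • a‖ := by
  obtain ⟨t, ht, s, hs, b, hb, rfl⟩ := Nat.exists_eq_mul_add_mul_add k hm hp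
  refine ⟨t, ht, b, hb, (dist_triangle _ ((t * (m * p) + s * p + b) • a) _).trans ?_⟩
  gcongr
  calc dist ((t * (m * p) + s * p + b) • a) ((t * (m * p) + b) • a) = ‖s • p • a‖ := by
        rw [dist_eq_norm, add_right_comm, add_nsmul, add_sub_cancel_left, mul_nsmul']
    _ ≤ s * ‖p • a‖ := norm_nsmul_le
    _ ≤ m * ‖p • a‖ := by gcongr

namespace UnitAddCircle

variable {ι : Type*} [Fintype ι]

lemma volume_pi_univ : volume (Set.univ : Set (ι → UnitAddCircle)) = 1 := by
  simp [volume_pi, Measure.pi_univ]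

lemma volume_pi_closedBall (x : ι → UnitAddCircle) {r : ℝ} (hr : 0 ≤ r) :
    volume (closedBall x r) = ENNReal.ofReal (min 1 (2 * r)) ^ Fintype.card ι := by
  simp [MeasureTheory.volume_pi_closedBall x hr, AddCircle.volume_closedBall]

lemma exists_norm_nsmul_le_rpow (ξ : ι → UnitAddCircle) {N : ℕ} (hN : 0 < N) :
    ∃ j ∈ Set.Icc 1 N, ‖j • ξ‖ ≤ ((N : ℝ) + 1) ^ (-(1 / Fintype.card ι : ℝ)) := by
  set δ : ℝ := ((N : ℝ) + 1) ^ (-(1 / Fintype.card ι : ℝ))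
  refine NormedAddCommGroup.exists_norm_nsmul_le (μ := volume) ξ hN δ ?_
  have hδ : δ ≤ 1 := Real.rpow_le_one_of_one_le_of_nonpos (by linarith [N.cast_nonneg (α := ℝ)])
      (by rw [neg_nonpos]; positivity)
  rw [volume_pi_univ, volume_pi_closedBall _ (by positivity), mul_div_cancel₀ _ two_ne_zero,
    min_eq_right hδ, nsmul_eq_mul, ← ENNReal.ofReal_pow (by positivity)]
  rcases isEmpty_or_nonempty ι with hι | hι
  · simp
  have hδn : δ ^ Fintype.card ι = ((N : ℝ) + 1)⁻¹ := by
    rw [← Real.rpow_natCast, ← Real.rpow_mul (by positivity), neg_mul, one_div,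
      inv_mul_cancel₀ (by simp [Fintype.card_ne_zero]), Real.rpow_neg_one]
  rw [hδn, ← ENNReal.ofReal_natCast, ← ENNReal.ofReal_mul (by positivity)]
  push_cast
  rw [mul_inv_cancel₀ (by positivity), ENNReal.ofReal_one]

lemma one_le_card_mul_of_forall_dist_le {β : Type*} (f : β → ι → UnitAddCircle) (s : Finset β)
    {R : ℝ} (hR : 0 ≤ R) (h : ∀ x, ∃ b ∈ s, dist x (f b) ≤ R) :
    1 ≤ s.card * (2 * R) ^ Fintype.card ι := by
  have hcover : Set.univ ⊆ ⋃ b ∈ s, closedBall (f b) R := fun x _ => by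
    obtain ⟨b, hb, hx⟩ := h x
    exact Set.mem_biUnion hb hx
  have hvol : (1 : ENNReal) ≤ s.card * ENNReal.ofReal (2 * R) ^ Fintype.card ι :=
    calc (1 : ENNReal) = volume (Set.univ : Set (ι → UnitAddCircle)) := volume_pi_univ.symm
      _ ≤ ∑ b ∈ s, volume (closedBall (f b) R) :=
          (measure_mono hcover).trans (measure_biUnion_finset_le _ _)
      _ ≤ ∑ _b ∈ s, ENNReal.ofReal (2 * R) ^ Fintype.card ι := Finset.sum_le_sum fun b _ => by
          rw [volume_pi_closedBall _ hR]
          gcongr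
          exact min_le_right _ _
      _ = s.card * ENNReal.ofReal (2 * R) ^ Fintype.card ι := by rw [Finset.sum_const, nsmul_eq_mul]
  rwa [← ENNReal.ofReal_pow (by positivity), ← ENNReal.ofReal_natCast,
    ← ENNReal.ofReal_mul (by positivity), ENNReal.one_le_ofReal] at hvol

lemma div_lt_norm_nsmul_of_forall_dist_nsmul_le {a : ι → UnitAddCircle} {q m p : ℕ} {r : ℝ}
    (hr : 0 ≤ r) (hm : 0 < m) (hp : 0 < p) (hdense : ∀ x, ∃ k ≤ q, dist x (k • a) ≤ r)
    (hqm : 2 * q * (4 * r) ^ Fintype.card ι ≤ m) (hpr : 2 * p * (4 * r) ^ Fintype.card ι < 1) :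
    r / m < ‖p • a‖ := by
  by_contra! hsmall
  have hm' : (0 : ℝ) < m := by exact_mod_cast hm
  have hcover : ∀ x, ∃ z ∈ Finset.range (q / (m * p) + 1) ×ˢ Finset.range p,
      dist x ((z.1 * (m * p) + z.2) • a) ≤ 2 * r := fun x => by
    obtain ⟨k, hkq, hk⟩ := hdense x
    obtain ⟨t, ht, b, hb, htb⟩ := exists_dist_nsmul_le_add_mul_norm_nsmul a x k hm hp
    refine ⟨(t, b), Finset.mem_product.2 ⟨Finset.mem_range.2 ?_, Finset.mem_range.2 hb⟩, ?_⟩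
    · exact Nat.lt_succ_of_le (ht.trans (Nat.div_le_div_right hkq))
    · have := (le_div_iff₀' hm').1 hsmall
      linarith
  have hcount := one_le_card_mul_of_forall_dist_le _ _ (by positivity) hcover
  have hcard : (((Finset.range (q / (m * p) + 1) ×ˢ Finset.range p).card : ℕ) : ℝ) ≤ q / m + p := by
    rw [Finset.card_product, Finset.card_range, Finset.card_range]
    have := Nat.cast_div_le (α := ℝ) (m := q) (n := m * p)
    have hp' : (0 : ℝ) < p := by exact_mod_cast hp
    push_cast at this ⊢
    calc ((q / (m * p) : ℕ) + 1 : ℝ) * p ≤ (q / (m * p) + 1) * p := by gcongr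
      _ = q / m + p := by field_simp
  have hqm' : q / m * (4 * r) ^ Fintype.card ι ≤ 1 / 2 := by
    rw [div_mul_eq_mul_div, div_le_iff₀ hm']; linarith
  rw [show (2 : ℝ) * (2 * r) = 4 * r by ring] at hcount
  have := mul_le_mul_of_nonneg_right hcard (by positivity : (0 : ℝ) ≤ (4 * r) ^ Fintype.card ι)
  linarith

end UnitAddCircle

lemma nint_eq_norm (x : ℝ) : nint x = ‖(x : UnitAddCircle)‖ := by
  rw [UnitAddCircle.norm_eq]
  exact le_antisymm (ciInf_le ⟨0, by rintro _ ⟨a, rfl⟩; positivity⟩ _) (le_ciInf (round_le x))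

lemma iSup_nint_eq_norm {ι : Type*} [Fintype ι] (x : ι → ℝ) :
    ⨆ i, nint (x i) = ‖((↑) ∘ x : ι → UnitAddCircle)‖ := by
  simp_rw [nint_eq_norm]
  exact Pi.iSup_norm_eq_norm _

section psiFun

variable {n : ℕ} (α : Fin n → ℝ)

lemma iSup_nint_mul_eq_norm_nsmul (k : ℕ) :
    ⨆ j, nint ((k : ℝ) * α j) = ‖k • ((↑) ∘ α : Fin n → UnitAddCircle)‖ := by
  rw [iSup_nint_eq_norm]
  congr 1
  ext j
  simp only [Function.comp_apply, Pi.smul_apply, ← AddCircle.coe_nsmul, nsmul_eq_mul]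

lemma iSup_nint_mul_sub_eq_dist_nsmul (k : ℕ) (η : Fin n → ℝ) :
    ⨆ j, nint ((k : ℝ) * α j - η j) =
      dist ((↑) ∘ η : Fin n → UnitAddCircle) (k • ((↑) ∘ α : Fin n → UnitAddCircle)) := by
  rw [iSup_nint_eq_norm, dist_eq_norm']
  congr 1
  ext j
  simp only [Function.comp_apply, Pi.sub_apply, Pi.smul_apply, AddCircle.coe_sub,
    ← AddCircle.coe_nsmul, nsmul_eq_mul]

lemma psiFun_le_norm_nsmul {q : ℕ} (hq : 1 ≤ q) {t : ℝ} (ht : (q : ℝ) ≤ t) :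
    psiFun n α t ≤ ‖q • ((↑) ∘ α : Fin n → UnitAddCircle)‖ := by
  rw [← iSup_nint_mul_eq_norm_nsmul]
  refine csInf_le ⟨0, ?_⟩ ⟨q, hq, ht, rfl⟩
  rintro _ ⟨k, -, -, rfl⟩
  rw [iSup_nint_mul_eq_norm_nsmul]
  exact norm_nonneg _

lemma le_psiFun {t c : ℝ} (ht : 1 ≤ t)
    (h : ∀ q : ℕ, 1 ≤ q → (q : ℝ) ≤ t → c ≤ ‖q • ((↑) ∘ α : Fin n → UnitAddCircle)‖) :
    c ≤ psiFun n α t := by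
  refine le_csInf ⟨_, 1, le_rfl, by exact_mod_cast ht, rfl⟩ ?_
  rintro _ ⟨q, hq, hqt, rfl⟩
  rw [iSup_nint_mul_eq_norm_nsmul]
  exact h q hq hqt

lemma rpow_mul_psiFun_le_one {t : ℝ} (ht : 1 ≤ t) : t ^ ((1 : ℝ) / n) * psiFun n α t ≤ 1 := by
  have hN : 0 < ⌊t⌋₊ := Nat.floor_pos.2 ht
  obtain ⟨j, ⟨hj1, hjN⟩, hj⟩ := UnitAddCircle.exists_norm_nsmul_le_rpow ((↑) ∘ α) hN
  have hjt : (j : ℝ) ≤ t := (Nat.cast_le.2 hjN).trans (Nat.floor_le (by linarith))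
  rw [Fintype.card_fin, Real.rpow_neg (by positivity)] at hj
  calc t ^ ((1 : ℝ) / n) * psiFun n α t
      ≤ t ^ ((1 : ℝ) / n) * (((⌊t⌋₊ : ℝ) + 1) ^ ((1 : ℝ) / n))⁻¹ := by
        gcongr
        exact (psiFun_le_norm_nsmul α hj1 hjt).trans hj
    _ ≤ 1 := by
        rw [← div_eq_mul_inv, div_le_one (by positivity)]
        exact Real.rpow_le_rpow (by linarith) (Nat.lt_floor_add_one t).le (by positivity)

lemma forall_exists_dist_nsmul_le {q : ℕ} {r : ℝ}
    (h : ∀ η : Fin n → ℝ, ∃ k : ℕ, 1 ≤ k ∧ k ≤ q ∧ (⨆ j, nint ((k : ℝ) * α j - η j)) ≤ r)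
    (x : Fin n → UnitAddCircle) : ∃ k ≤ q, dist x (k • ((↑) ∘ α : Fin n → UnitAddCircle)) ≤ r := by
  obtain ⟨η, rfl⟩ :=
    (QuotientAddGroup.mk_surjective (s := AddSubgroup.zmultiples (1 : ℝ))).comp_left x
  obtain ⟨k, -, hkq, hk⟩ := h η
  exact ⟨k, hkq, by rwa [← iSup_nint_mul_sub_eq_dist_nsmul]⟩

lemma div_le_psiFun_of_forall_dist_nsmul_le {q m : ℕ} {r T : ℝ} (hr : 0 ≤ r) (hm : 0 < m)
    (hdense : ∀ x, ∃ k ≤ q, dist x (k • ((↑) ∘ α : Fin n → UnitAddCircle)) ≤ r)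
    (hqm : 2 * q * (4 * r) ^ n ≤ m) (hT : 1 ≤ T) (hTr : 4 * T * (4 * r) ^ n ≤ 1) :
    r / m ≤ psiFun n α T := by
  refine le_psiFun α hT fun p hp hpT => le_of_lt ?_
  refine UnitAddCircle.div_lt_norm_nsmul_of_forall_dist_nsmul_le hr hm hp hdense
    (by rwa [Fintype.card_fin]) ?_
  rw [Fintype.card_fin]
  nlinarith [pow_nonneg (by positivity : (0 : ℝ) ≤ 4 * r) n]

lemma le_rpow_mul_psiFun_of_forall_dist_nsmul_le (hn : n ≠ 0) {δ : ℝ} (hδ : 0 < δ) {q : ℕ}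
    (hq : 1 ≤ q) (hdense : ∀ x, ∃ k ≤ q,
      dist x (k • ((↑) ∘ α : Fin n → UnitAddCircle)) ≤ δ / (q : ℝ) ^ ((1 : ℝ) / n))
    (hT : 1 ≤ q / (4 * (4 * δ) ^ n)) :
    δ / ((4 * (4 * δ) ^ n) ^ ((1 : ℝ) / n) * ⌈2 * (4 * δ) ^ n⌉₊) ≤
      (q / (4 * (4 * δ) ^ n)) ^ ((1 : ℝ) / n) * psiFun n α (q / (4 * (4 * δ) ^ n)) := by
  set D : ℝ := (4 * δ) ^ n
  set r : ℝ := δ / (q : ℝ) ^ ((1 : ℝ) / n) with hr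
  have hq0 : (0 : ℝ) < q := by exact_mod_cast hq
  have hr0 : 0 < r := by rw [hr]; positivity
  have hrq : (4 * r) ^ n * q = D := by
    rw [mul_div_assoc', div_pow, one_div, Real.rpow_inv_natCast_pow hq0.le hn,
      div_mul_cancel₀ _ hq0.ne']
  have hTr : 4 * (q / (4 * D)) * (4 * r) ^ n = 1 := by
    rw [← hrq]
    field_simp
  have hpsi : r / ⌈2 * D⌉₊ ≤ psiFun n α (q / (4 * D)) :=
    div_le_psiFun_of_forall_dist_nsmul_le α hr0.le (Nat.ceil_pos.2 (by positivity)) hdense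
      (by linarith [Nat.le_ceil (2 * D)]) hT hTr.le
  calc δ / ((4 * D) ^ ((1 : ℝ) / n) * ⌈2 * D⌉₊)
      = (q / (4 * D)) ^ ((1 : ℝ) / n) * (r / ⌈2 * D⌉₊) := by
        rw [Real.div_rpow hq0.le (by positivity), hr]
        field_simp
    _ ≤ (q / (4 * D)) ^ ((1 : ℝ) / n) * psiFun n α (q / (4 * D)) := by gcongr

end psiFun

/-- **Khintchine's criterion (converse direction).** If there exist `δ > 0` and
infinitely many positive integers `q` such that for every `η ∈ ℝ^n` there is a positive
integer `k ≤ q` with `max_j ‖kα_j - η_j‖ ≤ δ / q^(1/n)`, then `α` is non-singular,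
i.e. `limsup_{t→∞} t^(1/n) ψ_α(t) > 0`. -/
theorem well_distributed_implies_nonsingular
    (n : ℕ) (hn : 1 ≤ n) (α : Fin n → ℝ)
    (h : ∃ δ : ℝ, 0 < δ ∧ ∀ Q : ℕ, ∃ q : ℕ, Q ≤ q ∧ 1 ≤ q ∧
      ∀ η : Fin n → ℝ, ∃ k : ℕ, 1 ≤ k ∧ k ≤ q ∧
        (⨆ j, nint ((k : ℝ) * α j - η j)) ≤ δ / (q : ℝ) ^ ((1 : ℝ) / n)) :
    0 < Filter.atTop.limsup (fun t : ℝ => t ^ ((1 : ℝ) / n) * psiFun n α t) := by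
  obtain ⟨δ, hδ, hdense⟩ := h
  set D : ℝ := (4 * δ) ^ n
  -- `limsup` in `ℝ` is junk (`0`) unless the function is eventually bounded above
  have hbdd : IsBoundedUnder (· ≤ ·) atTop (fun t : ℝ => t ^ ((1 : ℝ) / n) * psiFun n α t) :=
    isBoundedUnder_of_eventually_le
      ((eventually_ge_atTop 1).mono fun _ => rpow_mul_psiFun_le_one α)
  refine (by positivity : 0 < δ / ((4 * D) ^ ((1 : ℝ) / n) * ⌈2 * D⌉₊)).trans_le
    (le_limsup_of_frequently_le (frequently_atTop.2 fun t₀ => ?_) hbdd)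
  obtain ⟨q, hQq, hq, hqdense⟩ := hdense ⌈4 * D * max t₀ 1⌉₊
  have hT : max t₀ 1 ≤ q / (4 * D) := by
    rw [le_div_iff₀' (by positivity)]
    exact (Nat.le_ceil _).trans (by exact_mod_cast hQq)
  exact ⟨_, le_of_max_le_left hT, le_rpow_mul_psiFun_of_forall_dist_nsmul_le α (by omega) hδ hq
    (forall_exists_dist_nsmul_le α hqdense) (le_of_max_le_right hT)⟩
end
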